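/- arXiv:1609.08330 — 2 statements merged into one kernel-verified Lean document; each statement's English description precedes it below -/
import Mathlib

section
/- Single-letter computation underlying Proposition 9. Let a ∈ [0,1], ζ ∈ [0,1/2], β, ε ∈ [0,1]. Let A ~ Bernoulli(a), V' ~ Bernoulli(1/2), W ~ Bernoulli(ζ), and let S_B ~ Bernoulli(β), S_E ~ Bernoulli(ε) be erasure indicators, all five mutually independent. Define V = A ⊕ V', X = V, Y = X ⊕ A (= V'), Z = Y ⊕ W, B = A if S_B = 0 and B = 'e' if S_B = 1, and E = A if S_E = 0 and E = 'e' if S_E = 1. Then I(V; B, Y) − I(V; E, Z) = ε·h₂(a⋆ζ) − β·h₂(a) + (1 − ε)·h₂(ζ). -/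
open scoped BigOperators Classical

noncomputable section

/-- The function `x ↦ -x·log₂ x` used in Shannon entropy (with `0·log 0 = 0`). -/
def nH (x : ℝ) : ℝ := -(x * Real.logb 2 x)

/-- Shannon entropy (in bits) of a pmf on a finite set. -/
def Hent {S : Type*} [Fintype S] (p : S → ℝ) : ℝ := ∑ s, nH (p s)

/-- Pushforward of a pmf along a map: the distribution of the random variable `f`. -/
def pmap {Ω S : Type*} [Fintype Ω] (p : Ω → ℝ) (f : Ω → S) : S → ℝ :=
  fun s => ∑ ω, if f ω = s then p ω else 0

/-- Entropy (in bits) of the random variable `f` on the finite probability space `(Ω, p)`. -/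
def entOf {Ω S : Type*} [Fintype Ω] [Fintype S] (p : Ω → ℝ) (f : Ω → S) : ℝ :=
  Hent (pmap p f)

/-- Conditional Shannon entropy `H(f | g)` (in bits). -/
def condEnt {Ω S T : Type*} [Fintype Ω] [Fintype S] [Fintype T]
    (p : Ω → ℝ) (f : Ω → S) (g : Ω → T) : ℝ :=
  entOf p (fun ω => (f ω, g ω)) - entOf p g

/-- Mutual information `I(f; g)` (in bits). -/
def MI {Ω S T : Type*} [Fintype Ω] [Fintype S] [Fintype T]
    (p : Ω → ℝ) (f : Ω → S) (g : Ω → T) : ℝ :=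
  entOf p f + entOf p g - entOf p (fun ω => (f ω, g ω))

/-- Conditional mutual information `I(f; g | h)` (in bits). -/
def CMI {Ω S T W : Type*} [Fintype Ω] [Fintype S] [Fintype T] [Fintype W]
    (p : Ω → ℝ) (f : Ω → S) (g : Ω → T) (h : Ω → W) : ℝ :=
  entOf p (fun ω => (f ω, h ω)) + entOf p (fun ω => (g ω, h ω))
    - entOf p (fun ω => (f ω, g ω, h ω)) - entOf p h

/-- `p` is a probability mass function on the finite set `S`. -/
def IsPMF {S : Type*} [Fintype S] (p : S → ℝ) : Prop :=
  (∀ s, 0 ≤ p s) ∧ ∑ s, p s = 1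

/-- `W` is a transition probability (stochastic kernel) from `S` to `T`. -/
def IsKernel {S T : Type*} [Fintype S] [Fintype T] (W : S → T → ℝ) : Prop :=
  ∀ s, IsPMF (W s)

/-- Binary entropy function `h₂` (in bits). -/
def h2 (x : ℝ) : ℝ := nH x + nH (1 - x)

/-- Binary convolution `a ⋆ b = a(1-b) + b(1-a)`. -/
def bstar (a b : ℝ) : ℝ := a * (1 - b) + b * (1 - a)

/-- Bernoulli pmf on `Bool`: `P[true] = p`, `P[false] = 1 - p`. -/
def bern (p : ℝ) : Bool → ℝ := fun b => if b then p else 1 - p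

/-- Product pmf of the five mutually independent random variables
`(A, V', W, S_B, S_E)` with parameters `(a, 1/2, ζ, β, ε)`. -/
def p12 (a ζ β ε : ℝ) : Bool × Bool × Bool × Bool × Bool → ℝ :=
  fun ω => bern a ω.1 * bern (1 / 2) ω.2.1 * bern ζ ω.2.2.1 *
    bern β ω.2.2.2.1 * bern ε ω.2.2.2.2

/-- Auxiliary: `nH 0 = 0`. -/
lemma nH_zero' : nH 0 = 0 := by simp [nH]

/-- Auxiliary: `nH (1/2) = 1/2`. -/
lemma nH_half' : nH (1/2) = 1/2 := by
  simp [nH, one_div, Real.logb_inv, Real.logb_self_eq_one]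

/-- Auxiliary: `nH` of a product. -/
lemma nH_mul' (x y : ℝ) : nH (x * y) = y * nH x + x * nH y := by
  rcases eq_or_ne x 0 with h | h
  · simp [nH, h]
  rcases eq_or_ne y 0 with h' | h'
  · simp [nH, h']
  simp only [nH, Real.logb, Real.log_mul h h']
  ring

set_option maxHeartbeats 2000000 in
/-- **Single-letter computation underlying Proposition 9.** With `A ∼ Bernoulli(a)`,
`V' ∼ Bernoulli(1/2)`, `W ∼ Bernoulli(ζ)`, erasure indicators `S_B ∼ Bernoulli(β)`,
`S_E ∼ Bernoulli(ε)`, all independent, and `V = A ⊕ V'`, `X = V`, `Y = X ⊕ A = V'`,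
`Z = Y ⊕ W`, `B` the `β`-erased version of `A` and `E` the `ε`-erased version of `A`:
`I(V; B,Y) − I(V; E,Z) = ε h₂(a⋆ζ) − β h₂(a) + (1 − ε) h₂(ζ)`. -/
theorem single_letter_prop9 (a ζ β ε : ℝ)
    (ha : a ∈ Set.Icc (0 : ℝ) 1) (hζ : ζ ∈ Set.Icc (0 : ℝ) (1 / 2))
    (hβ : β ∈ Set.Icc (0 : ℝ) 1) (hε : ε ∈ Set.Icc (0 : ℝ) 1) :
    MI (p12 a ζ β ε)
        (fun ω => xor ω.1 ω.2.1)
        (fun ω => ((if ω.2.2.2.1 then (none : Option Bool) else some ω.1), ω.2.1))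
      - MI (p12 a ζ β ε)
        (fun ω => xor ω.1 ω.2.1)
        (fun ω => ((if ω.2.2.2.2 then (none : Option Bool) else some ω.1),
                    xor ω.2.1 ω.2.2.1))
      = ε * h2 (bstar a ζ) - β * h2 a + (1 - ε) * h2 ζ := by
  have hV : pmap (p12 a ζ β ε) (fun ω => xor ω.1 ω.2.1) = fun _ => (1/2 : ℝ) := by
    funext v
    cases v <;>
      simp [pmap, p12, bern, Fintype.sum_prod_type, Fintype.sum_bool] <;> ring
  have hBY : pmap (p12 a ζ β ε)
      (fun ω => ((if ω.2.2.2.1 then (none : Option Bool) else some ω.1), ω.2.1))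
      = fun s => (Option.elim s.1 β (fun b => (1-β) * bern a b)) * (1/2) := by
    funext s
    obtain ⟨o, y⟩ := s
    rcases o with _ | b
    · cases y <;>
        simp [pmap, p12, bern, Fintype.sum_prod_type, Fintype.sum_bool] <;> ring
    · cases b <;> cases y <;>
        simp [pmap, p12, bern, Fintype.sum_prod_type, Fintype.sum_bool] <;> ring
  have hEZ : pmap (p12 a ζ β ε)
      (fun ω => ((if ω.2.2.2.2 then (none : Option Bool) else some ω.1),
          xor ω.2.1 ω.2.2.1))
      = fun s => (Option.elim s.1 ε (fun b => (1-ε) * bern a b)) * (1/2) := by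
    funext s
    obtain ⟨o, z⟩ := s
    rcases o with _ | b
    · cases z <;>
        simp [pmap, p12, bern, Fintype.sum_prod_type, Fintype.sum_bool] <;> ring
    · cases b <;> cases z <;>
        simp [pmap, p12, bern, Fintype.sum_prod_type, Fintype.sum_bool] <;> ring
  have hVBY : pmap (p12 a ζ β ε)
      (fun ω => ((xor ω.1 ω.2.1 : Bool),
        ((if ω.2.2.2.1 then (none : Option Bool) else some ω.1), ω.2.1)))
      = fun s => (Option.elim s.2.1 (β * bern a (xor s.1 s.2.2))
          (fun b => if xor s.1 s.2.2 = b then (1-β) * bern a b else 0)) * (1/2) := by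
    funext s
    obtain ⟨v, o, y⟩ := s
    rcases o with _ | b
    · cases v <;> cases y <;>
        simp [pmap, p12, bern, Fintype.sum_prod_type, Fintype.sum_bool] <;> ring
    · cases b <;> cases v <;> cases y <;>
        simp [pmap, p12, bern, Fintype.sum_prod_type, Fintype.sum_bool] <;> ring
  have hVEZ : pmap (p12 a ζ β ε)
      (fun ω => ((xor ω.1 ω.2.1 : Bool),
        ((if ω.2.2.2.2 then (none : Option Bool) else some ω.1), xor ω.2.1 ω.2.2.1)))
      = fun s => (Option.elim s.2.1
          (ε * bern (a * (1 - ζ) + ζ * (1 - a)) (xor s.1 s.2.2))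
          (fun b => (1-ε) * bern a b * bern ζ (xor (xor s.1 s.2.2) b))) * (1/2) := by
    funext s
    obtain ⟨v, o, z⟩ := s
    rcases o with _ | b
    · cases v <;> cases z <;>
        simp [pmap, p12, bern, Fintype.sum_prod_type, Fintype.sum_bool] <;> ring
    · cases b <;> cases v <;> cases z <;>
        simp [pmap, p12, bern, Fintype.sum_prod_type, Fintype.sum_bool] <;> ring
  simp only [MI, entOf, hV, hBY, hEZ, hVBY, hVEZ]
  simp [Hent, Fintype.sum_prod_type, Fintype.sum_option, Fintype.sum_bool,
    bern, nH_mul', nH_half', nH_zero', h2, bstar]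
  ring
end
end

section
/- Key-leakage comparison inequality (chain (45) in the equivocation analysis of Theorem 2). Let C, R₁, R₂, R_c, R_p, E, Z be random variables on finite sets such that: (i) (R_c, R_p) = M(R₁, R₂) for some injective (one-to-one) map M; (ii) R₁ = M'(R_c) for some map M'; and (iii) Z and E are conditionally independent given (C, R₁, R₂). Then I(R₂; E | C, R₁) − I(R_p; E | C, R_c, Z) ≥ 0. -/
open scoped BigOperators Classical

noncomputable section

/-! Write `I(X;E|Y) = H(E|Y) - H(E|X,Y)`. Since `(R_p, C, R_c, Z)` and `(Z, C, R₁, R₂)` induce the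
same partition of the sample space, the Markov chain gives
`H(E|R_p,C,R_c,Z) = H(E|Z,C,R₁,R₂) = H(E|C,R₁,R₂)`, so the difference equals
`H(E|C,R₁) - H(E|C,R_c,Z)`. This is nonnegative because `(C,R_c,Z)` determines `(C,R₁)` and
conditioning reduces entropy, an instance of Shannon's inequality `I(X;Y|W) ≥ 0`, which follows
from `log x ≥ 1 - 1/x`. -/

open Finset Real

section Pushforward

variable {Ω S T : Type*} [Fintype Ω] (p : Ω → ℝ)

theorem sum_pmap_mul [Fintype S] (X : Ω → S) (F : S → ℝ) :
    ∑ s, pmap p X s * F s = ∑ ω, p ω * F (X ω) := by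
  simp only [pmap, sum_mul, ite_mul, zero_mul]
  rw [sum_comm]
  simp [sum_ite_eq]

theorem sum_pmap [Fintype S] (X : Ω → S) : ∑ s, pmap p X s = ∑ ω, p ω := by
  simpa using sum_pmap_mul p X 1

variable {p}

theorem pmap_nonneg (hp : ∀ ω, 0 ≤ p ω) (X : Ω → S) (s : S) : 0 ≤ pmap p X s :=
  sum_nonneg fun ω _ => ite_nonneg (hp ω) le_rfl

theorem le_pmap_apply (hp : ∀ ω, 0 ≤ p ω) (X : Ω → S) (ω : Ω) :
    p ω ≤ pmap p X (X ω) := by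
  simpa [pmap] using single_le_sum (f := fun ω' => if X ω' = X ω then p ω' else 0)
    (fun ω' _ => ite_nonneg (hp ω') le_rfl) (mem_univ ω)

variable (p)

theorem sum_pmap_prod_left [Fintype S] (X : Ω → S) (Y : Ω → T) (t : T) :
    ∑ s, pmap p (fun ω => (X ω, Y ω)) (s, t) = pmap p Y t := by
  simp only [pmap, Prod.mk.injEq, ite_and]
  rw [sum_comm]
  simp [sum_ite_eq]

theorem entOf_eq_neg_sum [Fintype S] (X : Ω → S) :
    entOf p X = -∑ ω, p ω * logb 2 (pmap p X (X ω)) := by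
  rw [← sum_pmap_mul p X (fun s => logb 2 (pmap p X s))]
  simp [entOf, Hent, nH]

theorem entOf_congr [Fintype S] [Fintype T] {X : Ω → S} {Y : Ω → T}
    (h : ∀ ω ω', X ω = X ω' ↔ Y ω = Y ω') :
    entOf p X = entOf p Y := by
  have hpmap : ∀ ω, pmap p X (X ω) = pmap p Y (Y ω) := fun ω =>
    sum_congr rfl fun ω' _ => by rw [h ω' ω]
  simp only [entOf_eq_neg_sum, hpmap]

end Pushforward

theorem sum_mul_div_eq_of_marginals {S T W : Type*} [Fintype S] [Fintype T] [Fintype W]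
    (A : S × W → ℝ) (B : T × W → ℝ) (C : W → ℝ)
    (hA : ∀ w, ∑ s, A (s, w) = C w) (hB : ∀ w, ∑ t, B (t, w) = C w) :
    ∑ x : S × T × W, A (x.1, x.2.2) * B (x.2.1, x.2.2) / C x.2.2 = ∑ w, C w := by
  calc _ = ∑ w, (∑ s, A (s, w)) * (∑ t, B (t, w)) / C w := by
        simp only [Fintype.sum_prod_type_right, Fintype.sum_mul_sum, sum_div]
        exact sum_congr rfl fun w _ => sum_comm
    _ = ∑ w, C w := sum_congr rfl fun w _ => by rw [hA, hB, mul_self_div_self]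

section Shannon

variable {Ω S T W : Type*} [Fintype Ω] [Fintype S] [Fintype T] [Fintype W] {p : Ω → ℝ}

theorem sum_mul_condIndep_ratio_le_one (hp : IsPMF p) (f : Ω → S) (g : Ω → T) (h : Ω → W) :
    ∑ ω, p ω * (pmap p (fun ω => (f ω, h ω)) (f ω, h ω) * pmap p (fun ω => (g ω, h ω)) (g ω, h ω)
      / (pmap p (fun ω => (f ω, g ω, h ω)) (f ω, g ω, h ω) * pmap p h (h ω))) ≤ 1 := by
  set A := pmap p (fun ω => (f ω, h ω))
  set B := pmap p (fun ω => (g ω, h ω))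
  set C := pmap p h
  set Q := pmap p (fun ω => (f ω, g ω, h ω))
  -- `A * B / C` is the law under which `f` and `g` are conditionally independent given `h`.
  rw [← sum_pmap_mul p (fun ω => (f ω, g ω, h ω))
    (fun x => A (x.1, x.2.2) * B (x.2.1, x.2.2) / (Q x * C x.2.2))]
  calc _ ≤ ∑ x : S × T × W, A (x.1, x.2.2) * B (x.2.1, x.2.2) / C x.2.2 := by
        refine sum_le_sum fun x _ => show Q x * _ ≤ _ from ?_
        rcases (show 0 ≤ Q x from pmap_nonneg hp.1 _ x).eq_or_lt with hQ | hQ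
        · rw [← hQ, zero_mul]
          exact div_nonneg (mul_nonneg (pmap_nonneg hp.1 _ _) (pmap_nonneg hp.1 _ _))
            (pmap_nonneg hp.1 _ _)
        · rw [mul_div_assoc', mul_div_mul_left _ _ hQ.ne']
    _ = ∑ w, C w :=
        sum_mul_div_eq_of_marginals A B C (sum_pmap_prod_left p f h) (sum_pmap_prod_left p g h)
    _ = 1 := (sum_pmap p h).trans hp.2

theorem CMI_nonneg (hp : IsPMF p) (f : Ω → S) (g : Ω → T) (h : Ω → W) :
    0 ≤ CMI p f g h := by
  have hmass := sum_mul_condIndep_ratio_le_one hp f g h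
  set A := pmap p (fun ω => (f ω, h ω))
  set B := pmap p (fun ω => (g ω, h ω))
  set C := pmap p h
  set Q := pmap p (fun ω => (f ω, g ω, h ω))
  set L := fun ω => log (Q (f ω, g ω, h ω)) + log (C (h ω)) - log (A (f ω, h ω))
    - log (B (g ω, h ω))
  have hterm : ∀ ω, p ω * (1 - A (f ω, h ω) * B (g ω, h ω) / (Q (f ω, g ω, h ω) * C (h ω)))
      ≤ p ω * L ω := by
    intro ω
    rcases (hp.1 ω).eq_or_lt with hp0 | hp0
    · simp [← hp0]
    have hQ : 0 < Q (f ω, g ω, h ω) := hp0.trans_le (le_pmap_apply hp.1 _ ω)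
    have hC : 0 < C (h ω) := hp0.trans_le (le_pmap_apply hp.1 _ ω)
    have hA : 0 < A (f ω, h ω) := hp0.trans_le (le_pmap_apply hp.1 _ ω)
    have hB : 0 < B (g ω, h ω) := hp0.trans_le (le_pmap_apply hp.1 _ ω)
    refine mul_le_mul_of_nonneg_left ?_ hp0.le
    have := one_sub_inv_le_log_of_pos (div_pos (mul_pos hQ hC) (mul_pos hA hB))
    rwa [inv_div, log_div (mul_pos hQ hC).ne' (mul_pos hA hB).ne', log_mul hQ.ne' hC.ne',
      log_mul hA.ne' hB.ne', ← sub_sub] at this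
  have hlog : CMI p f g h * log 2 = ∑ ω, p ω * L ω := by
    simp only [L, CMI, entOf_eq_neg_sum, logb, mul_div_assoc', ← sum_div, mul_add, mul_sub,
      sum_add_distrib, sum_sub_distrib]
    field_simp
    ring
  refine nonneg_of_mul_nonneg_left ?_ (log_pos one_lt_two)
  calc (0 : ℝ)
      ≤ ∑ ω, p ω * (1 - A (f ω, h ω) * B (g ω, h ω) / (Q (f ω, g ω, h ω) * C (h ω))) := by
        simp only [mul_sub, mul_one, sum_sub_distrib, hp.2]
        linarith
    _ ≤ ∑ ω, p ω * L ω := sum_le_sum fun ω _ => hterm ω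
    _ = CMI p f g h * log 2 := hlog.symm

end Shannon

section CondEnt

variable {Ω S T W V : Type*} [Fintype Ω] [Fintype S] [Fintype T] [Fintype W] [Fintype V]
  (p : Ω → ℝ)

theorem CMI_eq_condEnt_sub (f : Ω → S) (g : Ω → T) (h : Ω → W) :
    CMI p f g h = condEnt p g h - condEnt p g (fun ω => (f ω, h ω)) := by
  have hswap : entOf p (fun ω => (f ω, g ω, h ω)) = entOf p (fun ω => (g ω, f ω, h ω)) :=
    entOf_congr p fun ω ω' => by simp only [Prod.mk.injEq]; tauto
  rw [CMI, condEnt, condEnt, hswap]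
  ring

theorem condEnt_congr_right (g : Ω → T) {h : Ω → W} {h' : Ω → V}
    (hh : ∀ ω ω', h ω = h ω' ↔ h' ω = h' ω') : condEnt p g h = condEnt p g h' := by
  rw [condEnt, condEnt, entOf_congr p hh,
    entOf_congr p (X := fun ω => (g ω, h ω)) (Y := fun ω => (g ω, h' ω))
      fun ω ω' => by simp only [Prod.mk.injEq, hh]]

variable {p}

theorem condEnt_le_condEnt_of_determines (hp : IsPMF p) (g : Ω → T) {h : Ω → W} {h' : Ω → V}
    (hh : ∀ ω ω', h ω = h ω' → h' ω = h' ω') : condEnt p g h ≤ condEnt p g h' := by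
  have hfiner : condEnt p g (fun ω => (h ω, h' ω)) = condEnt p g h :=
    condEnt_congr_right p g fun ω ω' => by
      simp only [Prod.mk.injEq]
      exact ⟨And.left, fun H => ⟨H, hh ω ω' H⟩⟩
  have := CMI_nonneg hp h g h'
  rw [CMI_eq_condEnt_sub, hfiner] at this
  linarith

end CondEnt

/-- **Key-leakage comparison inequality** (chain (45) in the equivocation analysis of
Theorem 2). If `(R_c, R_p) = M(R₁, R₂)` for an injective map `M`, `R₁ = M'(R_c)` for some
map `M'`, and `Z −∘− (C, R₁, R₂) −∘− E` is a Markov chain, then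
`I(R₂; E | C, R₁) − I(R_p; E | C, R_c, Z) ≥ 0`. -/
theorem key_leakage_comparison {Ω C K1 K2 Kc Kp Et Zt : Type*}
    [Fintype Ω] [Fintype C] [Fintype K1] [Fintype K2]
    [Fintype Kc] [Fintype Kp] [Fintype Et] [Fintype Zt]
    (p : Ω → ℝ) (hp : IsPMF p)
    (fC : Ω → C) (f1 : Ω → K1) (f2 : Ω → K2) (fc : Ω → Kc) (fp : Ω → Kp)
    (fE : Ω → Et) (fZ : Ω → Zt)
    (M : K1 × K2 → Kc × Kp) (hM : Function.Injective M)
    (hMeq : ∀ ω, (fc ω, fp ω) = M (f1 ω, f2 ω))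
    (M' : Kc → K1) (hM' : ∀ ω, f1 ω = M' (fc ω))
    (hMarkov : CMI p fZ fE (fun ω => (fC ω, f1 ω, f2 ω)) = 0) :
    0 ≤ CMI p f2 fE (fun ω => (fC ω, f1 ω))
        - CMI p fp fE (fun ω => (fC ω, fc ω, fZ ω)) := by
  have hkeys : ∀ ω ω', fc ω = fc ω' ∧ fp ω = fp ω' ↔ f1 ω = f1 ω' ∧ f2 ω = f2 ω' := by
    intro ω ω'
    rw [← Prod.mk.injEq, ← Prod.mk.injEq, hMeq, hMeq, hM.eq_iff]
  have hcond : condEnt p fE (fun ω => (fC ω, fc ω, fZ ω))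
      ≤ condEnt p fE (fun ω => (fC ω, f1 ω)) :=
    condEnt_le_condEnt_of_determines hp fE fun ω ω' H => by
      simp only [Prod.mk.injEq] at H ⊢
      exact ⟨H.1, by rw [hM', hM' ω', H.2.1]⟩
  have hR2 : condEnt p fE (fun ω => (f2 ω, fC ω, f1 ω))
      = condEnt p fE (fun ω => (fC ω, f1 ω, f2 ω)) :=
    condEnt_congr_right p fE fun ω ω' => by simp only [Prod.mk.injEq]; tauto
  have hRp : condEnt p fE (fun ω => (fp ω, fC ω, fc ω, fZ ω))
      = condEnt p fE (fun ω => (fZ ω, fC ω, f1 ω, f2 ω)) :=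
    condEnt_congr_right p fE fun ω ω' => by
      simp only [Prod.mk.injEq]
      have := hkeys ω ω'
      tauto
  rw [CMI_eq_condEnt_sub] at hMarkov
  rw [CMI_eq_condEnt_sub, CMI_eq_condEnt_sub]
  linarith
end
end
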